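/- arXiv:2207.14398 — 5 statements merged into one kernel-verified Lean document; each statement's English description precedes it below -/
import Mathlib

section
/- (Theorem 1) Let S : ℕ → Z_{n₂} ∪ {*} be a shift sequence with S(i+n₁) = S(i) for all i, let C : ℕ → 𝔽_q be a column sequence with C(j+n₂) = C(j) for all j, and let A be the 2-dimensional composed array defined by A(i,j) = C(j − S(i) mod n₂) if S(i) ≠ * and A(i,j) = 0 if S(i) = *. Then n₂·L(A) ≤ n₁·n₂·L(C), equivalently L(A) ≤ n₁·L(C); i.e., the normalized linear complexity of A is at most the normalized linear complexity of C. -/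
/-!
Every row of `A` is either zero or a shift of `C`, so each recurrence `g(y)` of `C` is also
a recurrence of `A`; and `x ^ n₁ - 1` is a recurrence of `A` because the rows repeat with
period `n₁`. Hence `y ↦ y` induces an algebra map `F[y]/Val(C) → F[x,y]/Val(A)`, and the
target is spanned over its image by `1, x, …, x ^ (n₁ - 1)`.
-/

open Polynomial

section Pairing

variable {F : Type*} [Field F]

noncomputable def seqPairing (c : ℕ → F) : F[X] →ₗ[F] F :=
  Polynomial.lsum fun j => LinearMap.mulRight F (c j)

theorem seqPairing_apply (c : ℕ → F) (g : F[X]) :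
    seqPairing c g = ∑ j ∈ g.support, g.coeff j * c j := rfl

theorem seqPairing_monomial (c : ℕ → F) (j : ℕ) (a : F) :
    seqPairing c (monomial j a) = a * c j := by
  simp [seqPairing]

theorem seqPairing_X_pow_sub_one (c : ℕ → F) (n : ℕ) :
    seqPairing c (X ^ n - 1) = c n - c 0 := by
  rw [map_sub, ← monomial_one_right_eq_X_pow, ← monomial_zero_one, seqPairing_monomial,
    seqPairing_monomial, one_mul, one_mul]

noncomputable def arrayPairing (A : ℕ → ℕ → F) : MvPolynomial (Fin 2) F →ₗ[F] F :=
  (MvPolynomial.basisMonomials (Fin 2) F).constr F fun v => A (v 0) (v 1)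

theorem arrayPairing_apply (A : ℕ → ℕ → F) (f : MvPolynomial (Fin 2) F) :
    arrayPairing A f = ∑ v ∈ f.support, f.coeff v * A (v 0) (v 1) := by
  rw [arrayPairing, Module.Basis.constr_apply]
  rfl

theorem arrayPairing_monomial (A : ℕ → ℕ → F) (v : Fin 2 →₀ ℕ) (a : F) :
    arrayPairing A (MvPolynomial.monomial v a) = a * A (v 0) (v 1) := by
  have : MvPolynomial.monomial v a = a • MvPolynomial.basisMonomials (Fin 2) F v := by
    simp [MvPolynomial.smul_monomial]
  rw [arrayPairing, this, map_smul, Module.Basis.constr_basis, smul_eq_mul]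

theorem arrayPairing_X_zero_pow_sub_one (A : ℕ → ℕ → F) (n : ℕ) :
    arrayPairing A (MvPolynomial.X 0 ^ n - 1) = A n 0 - A 0 0 := by
  rw [map_sub, MvPolynomial.X_pow_eq_monomial, ← MvPolynomial.C_1, MvPolynomial.C_apply,
    arrayPairing_monomial, arrayPairing_monomial]
  simp

theorem arrayPairing_aeval_X_one (A : ℕ → ℕ → F) (g : F[X]) :
    arrayPairing A (aeval (MvPolynomial.X 1) g) = seqPairing (A 0) g := by
  induction g using Polynomial.induction_on' with
  | add p q hp hq => simp only [map_add, hp, hq]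
  | monomial j a =>
    rw [aeval_monomial, seqPairing_monomial, MvPolynomial.X_pow_eq_monomial,
      MvPolynomial.algebraMap_eq, MvPolynomial.C_mul_monomial, mul_one, arrayPairing_monomial]
    simp

end Pairing

theorem Polynomial.finite_quotient_of_monic_mem {R : Type*} [CommRing R] {I : Ideal R[X]}
    {g : R[X]} (hg : g.Monic) (hgI : g ∈ I) : Module.Finite R (R[X] ⧸ I) := by
  have hle : Ideal.span {g} ≤ I := (Ideal.span_singleton_le_iff_mem I).mpr hgI
  have := hg.finite_quotient
  exact .of_surjective (Ideal.Quotient.factorₐ R hle).toLinearMap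
    (Ideal.Quotient.factor_surjective hle)

theorem MvPolynomial.adjoin_eq_top_of_surjective {σ R S : Type*} [CommRing R] [CommRing S]
    [Algebra R S] {ψ : MvPolynomial σ R →ₐ[R] S} (hψ : Function.Surjective ψ) {s : Set S}
    (hs : ∀ i, ψ (X i) ∈ s) : Algebra.adjoin R s = ⊤ := by
  refine eq_top_iff.mpr ?_
  rw [← (AlgHom.range_eq_top ψ).mpr hψ, ← Algebra.map_top, ← adjoin_range_X, AlgHom.map_adjoin]
  exact Algebra.adjoin_mono (Set.image_subset_iff.mpr (Set.range_subset_iff.mpr hs))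

theorem Function.Periodic.map_val_natCast_add_sub {α : Type*} {f : ℕ → α} {n : ℕ} [NeZero n]
    (hf : Function.Periodic f n) (s : ZMod n) (j β : ℕ) :
    f (((j + β : ℕ) : ZMod n) - s).val = f (j + ((β : ZMod n) - s).val) := by
  rw [← hf.map_mod_nat (j + _), ← ZMod.val_natCast]
  push_cast [ZMod.natCast_val, ZMod.cast_id]
  ring_nf

section Finrank

variable {F : Type*} [Field F]

theorem finrank_le_mul_finrank_of_adjoin_eq_top {B R : Type*} [CommRing B] [Algebra F B]
    [Module.Finite F B] [CommRing R] [Algebra F R] (φ : B →ₐ[F] R) {x : R} {n : ℕ}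
    (hn : 0 < n) (hx : x ^ n = 1) (hgen : Algebra.adjoin F (insert x (Set.range φ)) = ⊤) :
    Module.finrank F R ≤ n * Module.finrank F B := by
  let Φ : (Fin n → B) →ₗ[F] R :=
    ∑ i : Fin n, LinearMap.mulLeft F (x ^ (i : ℕ)) ∘ₗ φ.toLinearMap ∘ₗ LinearMap.proj i
  have hΦ (v : Fin n → B) : Φ v = ∑ i : Fin n, x ^ (i : ℕ) * φ (v i) := by
    simp [Φ, LinearMap.sum_apply]
  have hterm (k : ℕ) (b : B) : x ^ k * φ b ∈ LinearMap.range Φ := by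
    refine ⟨Pi.single ⟨k % n, Nat.mod_lt k hn⟩ b, ?_⟩
    rw [hΦ, Finset.sum_eq_single_of_mem _ (Finset.mem_univ _) fun i _ hi => by
      rw [Pi.single_eq_of_ne hi, map_zero, mul_zero], Pi.single_eq_same, ← pow_eq_pow_mod k hx]
  have hmul (r : R) (hr : r ∈ Algebra.adjoin F (insert x (Set.range φ))) :
      ∀ m ∈ LinearMap.range Φ, r * m ∈ LinearMap.range Φ := by
    induction hr using Algebra.adjoin_induction with
    | mem r hr =>
      rintro _ ⟨v, rfl⟩
      rw [hΦ, Finset.mul_sum]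
      refine Submodule.sum_mem _ fun i _ => ?_
      obtain rfl | ⟨c, rfl⟩ := hr
      · rw [← mul_assoc, ← pow_succ']
        exact hterm _ _
      · rw [mul_left_comm, ← map_mul]
        exact hterm _ _
    | algebraMap c =>
      intro m hm
      rw [← Algebra.smul_def]
      exact Submodule.smul_mem _ c hm
    | add r s _ _ hr hs =>
      intro m hm
      rw [add_mul]
      exact add_mem (hr m hm) (hs m hm)
    | mul r s _ _ hr hs =>
      intro m hm
      rw [mul_assoc]
      exact hr _ (hs m hm)
  have hsurj : LinearMap.range Φ = ⊤ := by
    refine eq_top_iff.mpr fun r _ => ?_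
    have h1 : (1 : R) ∈ LinearMap.range Φ := by simpa using hterm 0 1
    simpa using hmul r (hgen ▸ Algebra.mem_top) 1 h1
  calc Module.finrank F R = Module.finrank F (LinearMap.range Φ) := by rw [hsurj, finrank_top]
    _ ≤ Module.finrank F (Fin n → B) := LinearMap.finrank_range_le Φ
    _ = n * Module.finrank F B := by rw [Module.finrank_pi_fintype]; simp

theorem finrank_quotient_le_mul_finrank_quotient {I : Ideal (MvPolynomial (Fin 2) F)}
    {J : Ideal F[X]} [Module.Finite F (F[X] ⧸ J)] {n : ℕ} (hn : 0 < n)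
    (hX : MvPolynomial.X 0 ^ n - 1 ∈ I) (hJI : ∀ g ∈ J, aeval (MvPolynomial.X 1) g ∈ I) :
    Module.finrank F (MvPolynomial (Fin 2) F ⧸ I) ≤ n * Module.finrank F (F[X] ⧸ J) := by
  let φ : F[X] ⧸ J →ₐ[F] MvPolynomial (Fin 2) F ⧸ I :=
    Ideal.Quotient.liftₐ J ((Ideal.Quotient.mkₐ F I).comp (aeval (MvPolynomial.X 1)))
      fun g hg => Ideal.Quotient.eq_zero_iff_mem.mpr (hJI g hg)
  have hφ : φ.comp (Ideal.Quotient.mkₐ F J) =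
      (Ideal.Quotient.mkₐ F I).comp (aeval (MvPolynomial.X 1)) :=
    Ideal.Quotient.liftₐ_comp _ _ _
  refine finrank_le_mul_finrank_of_adjoin_eq_top φ hn
    (x := Ideal.Quotient.mk I (MvPolynomial.X 0)) ?_ ?_
  · rw [← map_pow, ← map_one (Ideal.Quotient.mk I), Ideal.Quotient.eq]
    exact hX
  · refine MvPolynomial.adjoin_eq_top_of_surjective (Ideal.Quotient.mkₐ_surjective F I) ?_
    intro i
    fin_cases i
    · exact Set.mem_insert _ _
    · exact Set.mem_insert_of_mem _ ⟨Ideal.Quotient.mkₐ F J X, by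
        rw [← AlgHom.comp_apply, hφ]
        simp⟩

end Finrank

theorem stmt_7_general {F : Type*} [Field F] (n₁ n₂ : ℕ)
    (hn₁ : 0 < n₁) [NeZero n₂]
    (S : ℕ → Option (ZMod n₂)) (hS : ∀ i : ℕ, S (i + n₁) = S i)
    (C : ℕ → F) (hC : ∀ j : ℕ, C (j + n₂) = C j)
    (A : ℕ → ℕ → F)
    (hA : ∀ i j : ℕ,
      A i j = (S i).elim 0 (fun s => C (((j : ZMod n₂) - s).val)))
    (IC : Ideal (Polynomial F))
    (hIC : ∀ g : Polynomial F,
      g ∈ IC ↔ ∀ β : ℕ, ∑ j ∈ g.support, g.coeff j * C (j + β) = 0)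
    (IA : Ideal (MvPolynomial (Fin 2) F))
    (hIA : ∀ f : MvPolynomial (Fin 2) F,
      f ∈ IA ↔ ∀ β₁ β₂ : ℕ,
        ∑ v ∈ f.support, f.coeff v * A (v 0 + β₁) (v 1 + β₂) = 0) :
    Module.finrank F (MvPolynomial (Fin 2) F ⧸ IA) ≤
      n₁ * Module.finrank F (Polynomial F ⧸ IC) := by
  replace hIC (g : F[X]) : g ∈ IC ↔ ∀ β, seqPairing (fun j => C (j + β)) g = 0 := hIC g
  replace hIA (f : MvPolynomial (Fin 2) F) :
      f ∈ IA ↔ ∀ β₁ β₂, arrayPairing (fun i j => A (i + β₁) (j + β₂)) f = 0 := by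
    simp only [hIA, arrayPairing_apply]
  have hXC : X ^ n₂ - 1 ∈ IC := (hIC _).mpr fun β => by
    rw [seqPairing_X_pow_sub_one, zero_add, add_comm, hC, sub_self]
  have hXA : MvPolynomial.X 0 ^ n₁ - 1 ∈ IA := (hIA _).mpr fun β₁ β₂ => by
    simp only [arrayPairing_X_zero_pow_sub_one, zero_add]
    rw [add_comm, hA, hA, hS, sub_self]
  have hIC_IA (g : F[X]) (hg : g ∈ IC) : aeval (MvPolynomial.X 1) g ∈ IA := by
    refine (hIA _).mpr fun β₁ β₂ => ?_
    rw [arrayPairing_aeval_X_one]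
    cases hs : S β₁ with
    | none => simp [hA, hs, seqPairing_apply]
    | some s =>
      simp only [zero_add, hA, hs, Option.elim, Function.Periodic.map_val_natCast_add_sub hC]
      exact (hIC g).mp hg _
  have := finite_quotient_of_monic_mem (monic_X_pow_sub_C (1 : F) (NeZero.ne n₂))
    (by rwa [map_one])
  exact finrank_quotient_le_mul_finrank_quotient hn₁ hXA hIC_IA

/-- Theorem 1: if `A` is the 2-dimensional array obtained by composing an
`n₁`-periodic shift sequence `S : ℕ → ZMod n₂ ∪ {*}` with an `n₂`-periodic
column sequence `C` (columns with undetermined shift `*` consisting of zeros),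
then `L(A) ≤ n₁ * L(C)`, i.e. the normalized linear complexity of `A` is at
most the normalized linear complexity of `C`. -/
theorem stmt_7 {F : Type*} [Field F] [Fintype F] (n₁ n₂ : ℕ)
    (hn₁ : 0 < n₁) [NeZero n₂]
    (S : ℕ → Option (ZMod n₂)) (hS : ∀ i : ℕ, S (i + n₁) = S i)
    (C : ℕ → F) (hC : ∀ j : ℕ, C (j + n₂) = C j)
    (A : ℕ → ℕ → F)
    (hA : ∀ i j : ℕ,
      A i j = (S i).elim 0 (fun s => C (((j : ZMod n₂) - s).val)))
    (IC : Ideal (Polynomial F))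
    (hIC : ∀ g : Polynomial F,
      g ∈ IC ↔ ∀ β : ℕ, ∑ j ∈ g.support, g.coeff j * C (j + β) = 0)
    (IA : Ideal (MvPolynomial (Fin 2) F))
    (hIA : ∀ f : MvPolynomial (Fin 2) F,
      f ∈ IA ↔ ∀ β₁ β₂ : ℕ,
        ∑ v ∈ f.support, f.coeff v * A (v 0 + β₁) (v 1 + β₂) = 0) :
    Module.finrank F (MvPolynomial (Fin 2) F ⧸ IA) ≤
      n₁ * Module.finrank F (Polynomial F ⧸ IC) :=
  stmt_7_general n₁ n₂ hn₁ S hS C hC A hA IC hIC IA hIA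
end

section
/- (Remark after Theorem 1, 3-dimensional case) Let SA : ℕ × ℕ → Z_{n₃} ∪ {*} be a shift array with SA(i+n₁, j) = SA(i, j+n₂) = SA(i,j) for all i,j, let C : ℕ → 𝔽_q be a column sequence with C(k+n₃) = C(k) for all k, and let A be the 3-dimensional composed array defined by A(i,j,k) = C(k − SA(i,j) mod n₃) if SA(i,j) ≠ * and A(i,j,k) = 0 if SA(i,j) = *. Then L(A) ≤ n₁·n₂·L(C); i.e., the normalized linear complexity of A is at most the normalized linear complexity of C. -/
/-!
Write `x, y, z` for the classes of the three variables in `𝔽_q[x,y,z]/Val(A)`. The periodicity of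
`SA` gives `x^{n₁} = y^{n₂} = 1`, and every column `k ↦ A(i, j, k)` of `A` is either zero or a shift
of `C`, so every `g ∈ Val(C)` kills `A` as a polynomial in `z` alone: `g(z) = 0`. Hence the quotient
is spanned over the image of `𝔽_q[z]/Val(C)` by the `n₁ n₂` monomials `x^i y^j` with `i < n₁`,
`j < n₂`, and `L(A) ≤ n₁ n₂ L(C)`; the periodicity of `C` makes `z^{n₃} - 1 ∈ Val(C)`, so `L(C)` is
finite.
-/

open Polynomial

section Pairing

variable {F : Type*} [Field F]

/-- `Val(c)` is the set of `g` with `pairing (fun k => c (k + β)) g = 0` for all `β`. -/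
noncomputable def pairing (c : ℕ → F) : F[X] →ₗ[F] F :=
  Polynomial.lsum fun k => LinearMap.toSpanSingleton F F (c k)

theorem pairing_apply (c : ℕ → F) (g : F[X]) :
    pairing c g = ∑ k ∈ g.support, g.coeff k * c k := by
  simp [pairing, Polynomial.sum_def]

theorem pairing_monomial (c : ℕ → F) (k : ℕ) (r : F) : pairing c (monomial k r) = r * c k := by
  simp [pairing]

theorem pairing_X_pow_sub_one (c : ℕ → F) (n : ℕ) : pairing c (X ^ n - 1) = c n - c 0 := by
  rw [map_sub, X_pow_eq_monomial, ← C_1, ← monomial_zero_left, pairing_monomial, pairing_monomial,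
    one_mul, one_mul]

theorem pairing_zero (g : F[X]) : pairing (0 : ℕ → F) g = 0 := by
  simp [pairing_apply]

variable {σ : Type*}

noncomputable def mvPairing (a : (σ →₀ ℕ) → F) : MvPolynomial σ F →ₗ[F] F :=
  (MvPolynomial.basisMonomials σ F).constr F a

theorem mvPairing_apply (a : (σ →₀ ℕ) → F) (f : MvPolynomial σ F) :
    mvPairing a f = ∑ v ∈ f.support, f.coeff v * a v := by
  simp only [mvPairing, Module.Basis.constr_apply, Finsupp.sum, smul_eq_mul]
  rfl

theorem mvPairing_monomial (a : (σ →₀ ℕ) → F) (u : σ →₀ ℕ) (r : F) :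
    mvPairing a (MvPolynomial.monomial u r) = r * a u := by
  have : MvPolynomial.monomial u r = r • MvPolynomial.basisMonomials σ F u := by
    simp [MvPolynomial.smul_monomial]
  rw [this, map_smul, mvPairing, Module.Basis.constr_basis, smul_eq_mul]

theorem mvPairing_X_pow_sub_one (a : (σ →₀ ℕ) → F) (i : σ) (n : ℕ) :
    mvPairing a (MvPolynomial.X i ^ n - 1) = a (Finsupp.single i n) - a 0 := by
  rw [map_sub, MvPolynomial.X_pow_eq_monomial, MvPolynomial.one_def, mvPairing_monomial,
    mvPairing_monomial, one_mul, one_mul]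

theorem mvPairing_aeval_X (a : (σ →₀ ℕ) → F) (i : σ) (g : F[X]) :
    mvPairing a (aeval (MvPolynomial.X i) g) = pairing (fun k => a (Finsupp.single i k)) g := by
  induction g using Polynomial.induction_on' with
  | add p q hp hq => simp only [map_add, hp, hq]
  | monomial k r =>
    rw [aeval_monomial, pairing_monomial, MvPolynomial.X_pow_eq_monomial, ← Algebra.smul_def,
      MvPolynomial.smul_monomial, smul_eq_mul, mul_one, mvPairing_monomial]

end Pairing

theorem Polynomial.Monic.finite_quotient_of_mem {R : Type*} [CommRing R] {J : Ideal R[X]}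
    {g : R[X]} (hg : g.Monic) (hgJ : g ∈ J) : Module.Finite R (R[X] ⧸ J) :=
  have := hg.finite_quotient
  have hle : Ideal.span {g} ≤ J := (Ideal.span_singleton_le_iff_mem J).mpr hgJ
  Module.Finite.of_surjective (Ideal.Quotient.factorₐ R hle).toLinearMap
    (Ideal.Quotient.factor_surjective hle)

theorem finrank_le_of_aeval_surjective {F M : Type*} [Field F] [CommRing M] [Algebra F M]
    {n₁ n₂ : ℕ} (hn₁ : 0 < n₁) (hn₂ : 0 < n₂) {v : Fin 3 → M}
    (hsurj : Function.Surjective (MvPolynomial.aeval v : MvPolynomial (Fin 3) F →ₐ[F] M))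
    (h₀ : v 0 ^ n₁ = 1) (h₁ : v 1 ^ n₂ = 1) (J : Ideal F[X]) [Module.Finite F (F[X] ⧸ J)]
    (hJ : ∀ g ∈ J, aeval (v 2) g = 0) :
    Module.finrank F M ≤ n₁ * n₂ * Module.finrank F (F[X] ⧸ J) := by
  let θ : F[X] ⧸ J →ₐ[F] M := Ideal.Quotient.liftₐ J (aeval (v 2)) hJ
  have hθ (g : F[X]) : θ (Ideal.Quotient.mk J g) = aeval (v 2) g := Ideal.Quotient.lift_mk J _ hJ
  let Φ := LinearMap.lsum F (fun _ : Fin n₁ × Fin n₂ => F[X] ⧸ J) F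
    fun p => LinearMap.mulLeft F (v 0 ^ (p.1 : ℕ) * v 1 ^ (p.2 : ℕ)) ∘ₗ θ.toLinearMap
  have hΦ : Function.Surjective Φ := by
    rw [← LinearMap.range_eq_top, eq_top_iff]
    rintro m -
    obtain ⟨f, rfl⟩ := hsurj m
    induction f using MvPolynomial.induction_on' with
    | monomial u r =>
      refine ⟨r • Pi.single (⟨u 0 % n₁, Nat.mod_lt _ hn₁⟩, ⟨u 1 % n₂, Nat.mod_lt _ hn₂⟩)
        (Ideal.Quotient.mk J (X ^ u 2)), ?_⟩
      rw [map_smul, LinearMap.lsum_piSingle, MvPolynomial.aeval_monomial,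
        Finsupp.prod_fintype _ _ fun _ => pow_zero _, Fin.prod_univ_three]
      simp [hθ, ← pow_eq_pow_mod _ h₀, ← pow_eq_pow_mod _ h₁, Algebra.smul_def, mul_assoc]
    | add p q hp hq => rw [map_add]; exact add_mem hp hq
  calc Module.finrank F M ≤ Module.finrank F (Fin n₁ × Fin n₂ → F[X] ⧸ J) :=
        LinearMap.finrank_le_finrank_of_surjective hΦ
    _ = n₁ * n₂ * Module.finrank F (F[X] ⧸ J) := by simp [Module.finrank_pi_fintype]

theorem Function.Periodic.apply_val_natCast_add {α : Type*} {c : ℕ → α} {n : ℕ} [NeZero n]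
    (hc : Function.Periodic c n) (k : ℕ) (t : ZMod n) :
    c ((k : ZMod n) + t).val = c (k + t.val) := by
  rw [ZMod.val_add, ZMod.val_natCast, Nat.mod_add_mod, hc.map_mod_nat]

theorem composed_column_eq_zero_or_shift {F : Type*} [Zero F] {n₃ : ℕ} [NeZero n₃]
    {SA : ℕ → ℕ → Option (ZMod n₃)} {C : ℕ → F} (hC : Function.Periodic C n₃)
    {A : ℕ → ℕ → ℕ → F}
    (hA : ∀ i j k : ℕ, A i j k = (SA i j).elim 0 (fun s => C (((k : ZMod n₃) - s).val)))
    (i j β : ℕ) :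
    (fun k => A i j (k + β)) = 0 ∨ ∃ γ, (fun k => A i j (k + β)) = fun k => C (k + γ) := by
  rcases hs : SA i j with _ | s
  · left
    ext k
    simp [hA, hs]
  · refine Or.inr ⟨((β : ZMod n₃) - s).val, funext fun k => ?_⟩
    rw [hA, hs, Option.elim_some, ← hC.apply_val_natCast_add, Nat.cast_add, add_sub_assoc]

theorem mvPairing_aeval_X_two_eq_zero {F : Type*} [Field F] {n₃ : ℕ} [NeZero n₃]
    {SA : ℕ → ℕ → Option (ZMod n₃)} {C : ℕ → F} (hC : Function.Periodic C n₃)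
    {A : ℕ → ℕ → ℕ → F}
    (hA : ∀ i j k : ℕ, A i j k = (SA i j).elim 0 (fun s => C (((k : ZMod n₃) - s).val)))
    {g : F[X]} (hg : ∀ γ, pairing (fun k => C (k + γ)) g = 0) (β₁ β₂ β₃ : ℕ) :
    mvPairing (fun v : Fin 3 →₀ ℕ => A (v 0 + β₁) (v 1 + β₂) (v 2 + β₃))
      (aeval (MvPolynomial.X 2) g) = 0 := by
  rw [mvPairing_aeval_X]
  simp only [Finsupp.single_apply, Fin.reduceEq, reduceIte, zero_add]
  rcases composed_column_eq_zero_or_shift hC hA β₁ β₂ β₃ with h | ⟨γ, h⟩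
  · rw [h, pairing_zero]
  · rw [h, hg]

theorem stmt_8_general {F : Type*} [Field F] (n₁ n₂ n₃ : ℕ)
    (hn₁ : 0 < n₁) (hn₂ : 0 < n₂) [NeZero n₃]
    (SA : ℕ → ℕ → Option (ZMod n₃))
    (hSA₁ : ∀ i j : ℕ, SA (i + n₁) j = SA i j)
    (hSA₂ : ∀ i j : ℕ, SA i (j + n₂) = SA i j)
    (C : ℕ → F) (hC : ∀ k : ℕ, C (k + n₃) = C k)
    (A : ℕ → ℕ → ℕ → F)
    (hA : ∀ i j k : ℕ,
      A i j k = (SA i j).elim 0 (fun s => C (((k : ZMod n₃) - s).val)))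
    (IC : Ideal (Polynomial F))
    (hIC : ∀ g : Polynomial F,
      g ∈ IC ↔ ∀ β : ℕ, ∑ k ∈ g.support, g.coeff k * C (k + β) = 0)
    (IA : Ideal (MvPolynomial (Fin 3) F))
    (hIA : ∀ f : MvPolynomial (Fin 3) F,
      f ∈ IA ↔ ∀ β₁ β₂ β₃ : ℕ,
        ∑ v ∈ f.support, f.coeff v * A (v 0 + β₁) (v 1 + β₂) (v 2 + β₃) = 0) :
    Module.finrank F (MvPolynomial (Fin 3) F ⧸ IA) ≤
      n₁ * n₂ * Module.finrank F (Polynomial F ⧸ IC) := by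
  simp only [← pairing_apply] at hIC
  simp only [← mvPairing_apply] at hIA
  have : Module.Finite F (F[X] ⧸ IC) := by
    refine (monic_X_pow_sub_C 1 (NeZero.ne n₃)).finite_quotient_of_mem ((hIC _).2 fun β => ?_)
    rw [C_1, pairing_X_pow_sub_one, zero_add, add_comm, hC, sub_self]
  let π := Ideal.Quotient.mkₐ F IA
  have hsurj : Function.Surjective (MvPolynomial.aeval (R := F) (π ∘ MvPolynomial.X)) := by
    rw [← MvPolynomial.aeval_unique π]
    exact Ideal.Quotient.mkₐ_surjective F IA
  have hJ : ∀ g ∈ IC, aeval (π (.X 2)) g = 0 := fun g hg => by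
    rw [aeval_algHom_apply, Ideal.Quotient.mkₐ_eq_mk, Ideal.Quotient.eq_zero_iff_mem, hIA]
    exact mvPairing_aeval_X_two_eq_zero hC hA ((hIC g).1 hg)
  refine finrank_le_of_aeval_surjective hn₁ hn₂ hsurj ?_ ?_ IC hJ <;>
  · rw [Function.comp_apply, ← map_pow, ← map_one π, Ideal.Quotient.mkₐ_eq_mk, Ideal.Quotient.eq,
      hIA]
    intro β₁ β₂ β₃
    simp [mvPairing_X_pow_sub_one, hA, add_comm n₁, add_comm n₂, hSA₁, hSA₂]

/-- 3-dimensional case of Theorem 1: if `A` is the 3-dimensional array obtained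
by composing a doubly periodic shift array `SA : ℕ × ℕ → ZMod n₃ ∪ {*}` with an
`n₃`-periodic column sequence `C` (columns with undetermined shift `*`
consisting of zeros), then `L(A) ≤ n₁ * n₂ * L(C)`, i.e. the normalized linear
complexity of `A` is at most the normalized linear complexity of `C`. -/
theorem stmt_8 {F : Type*} [Field F] [Fintype F] (n₁ n₂ n₃ : ℕ)
    (hn₁ : 0 < n₁) (hn₂ : 0 < n₂) [NeZero n₃]
    (SA : ℕ → ℕ → Option (ZMod n₃))
    (hSA₁ : ∀ i j : ℕ, SA (i + n₁) j = SA i j)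
    (hSA₂ : ∀ i j : ℕ, SA i (j + n₂) = SA i j)
    (C : ℕ → F) (hC : ∀ k : ℕ, C (k + n₃) = C k)
    (A : ℕ → ℕ → ℕ → F)
    (hA : ∀ i j k : ℕ,
      A i j k = (SA i j).elim 0 (fun s => C (((k : ZMod n₃) - s).val)))
    (IC : Ideal (Polynomial F))
    (hIC : ∀ g : Polynomial F,
      g ∈ IC ↔ ∀ β : ℕ, ∑ k ∈ g.support, g.coeff k * C (k + β) = 0)
    (IA : Ideal (MvPolynomial (Fin 3) F))
    (hIA : ∀ f : MvPolynomial (Fin 3) F,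
      f ∈ IA ↔ ∀ β₁ β₂ β₃ : ℕ,
        ∑ v ∈ f.support, f.coeff v * A (v 0 + β₁) (v 1 + β₂) (v 2 + β₃) = 0) :
    Module.finrank F (MvPolynomial (Fin 3) F ⧸ IA) ≤
      n₁ * n₂ * Module.finrank F (Polynomial F ⧸ IC) :=
  stmt_8_general n₁ n₂ n₃ hn₁ hn₂ SA hSA₁ hSA₂ C hC A hA IC hIC IA hIA
end

section
/- (Proposition 2) Let S : ℕ → Z_{n₂} be a shift sequence with S(i+n₁) = S(i) for all i (with no undetermined entries), let C : ℕ → 𝔽_q be a column sequence with C(j+n₂) = C(j) for all j and minimal polynomial m(y) (the monic generator of the ideal Val(C)), and let A be the 2-dimensional composed array defined by A(i,j) = C(j − S(i) mod n₂). If y − 1 divides m(y), then L(A) ≤ n₁·deg(m) − (n₁ − 1); equivalently, the normalized linear complexity satisfies L(A)/(n₁n₂) ≤ L(C)/n₂ − (n₁−1)/(n₁n₂). -/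
/-!
Write `m = (y - 1) u` with `u` monic. Every row of `A` is a cyclic shift of `C`, and since
`(y - 1) u` annihilates `C`, the `u`-weighted window sums of `C` do not depend on the shift; hence
`x ^ n₁ - 1`, `m(y)` and `(x - 1) u(y)` all lie in `Val(A)`. In the quotient
`Q = F[x, y] / Val(A)` both `x` and `y` therefore fix `u(y)`, and rewriting
`y ^ deg u = u(y) - (lower terms)` shows that the monomials `x ^ a y ^ b` with `a < n₁`,
`b < deg u`, together with `y ^ deg u`, span `Q`. There are `n₁ (deg m - 1) + 1` of them.
-/

open Polynomial Finset Module Submodule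

section SpanningSet

open scoped Classical

variable {F Q : Type*} [Field F] [CommRing Q] [Algebra F Q]

lemma mul_aeval_mem_of_degree_lt {V : Submodule F Q} {y z : Q} {p : F[X]} {k : ℕ}
    (hp : p.degree < k) (hV : ∀ b < k, z * y ^ b ∈ V) : z * aeval y p ∈ V := by
  rw [aeval_eq_sum_range, mul_sum]
  refine V.sum_mem fun i _ => ?_
  rw [mul_smul_comm]
  by_cases hik : i < k
  · exact V.smul_mem _ (hV i hik)
  · rw [coeff_eq_zero_of_degree_lt (hp.trans_le (by exact_mod_cast not_lt.mp hik)), zero_smul]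
    exact V.zero_mem

variable (x y : Q) (n e : ℕ)

noncomputable def spanningSet : Finset Q :=
  insert (y ^ e) ((range n ×ˢ range e).image fun p => x ^ p.1 * y ^ p.2)

lemma card_spanningSet_le : #(spanningSet x y n e) ≤ n * e + 1 :=
  (card_insert_le _ _).trans <| Nat.add_le_add_right
    (card_image_le.trans (by rw [card_product, card_range, card_range])) 1

variable {x y n e}

lemma pow_mul_pow_mem_span_spanningSet {a b : ℕ} (ha : a < n) (hb : b < e) :
    x ^ a * y ^ b ∈ span F (spanningSet x y n e : Set Q) :=
  subset_span <| mem_insert_of_mem <| mem_image_of_mem (fun p : ℕ × ℕ => x ^ p.1 * y ^ p.2)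
    (a := (a, b)) <| mem_product.2 ⟨mem_range.2 ha, mem_range.2 hb⟩

lemma pow_mem_span_spanningSet : y ^ e ∈ span F (spanningSet x y n e : Set Q) :=
  subset_span (mem_insert_self _ _)

lemma mul_pow_natDegree_mem_of_monic {V : Submodule F Q} {z : Q} {u : F[X]} (hu : u.Monic)
    (hzu : z * aeval y u ∈ V) (hV : ∀ b < u.natDegree, z * y ^ b ∈ V) :
    z * y ^ u.natDegree ∈ V := by
  have hsplit : aeval y u = aeval y u.eraseLead + y ^ u.natDegree := by
    conv_lhs => rw [← eraseLead_add_monomial_natDegree_leadingCoeff u]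
    rw [hu.leadingCoeff, ← X_pow_eq_monomial, map_add, aeval_X_pow]
  have hlow : u.eraseLead.degree < u.natDegree :=
    (degree_eraseLead_lt hu.ne_zero).trans_eq (degree_eq_natDegree hu.ne_zero)
  rw [← add_sub_cancel_left (aeval y u.eraseLead) (y ^ u.natDegree), ← hsplit, mul_sub]
  exact V.sub_mem hzu (mul_aeval_mem_of_degree_lt hlow hV)

variable {u : F[X]}

lemma aeval_mem_span_spanningSet (hn : 0 < n) :
    aeval y u ∈ span F (spanningSet x y n u.natDegree : Set Q) := by
  have hdeg : u.degree < ↑(u.natDegree + 1) :=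
    degree_le_natDegree.trans_lt (WithBot.coe_lt_coe.2 u.natDegree.lt_succ_self)
  rw [← one_mul (aeval y u)]
  refine mul_aeval_mem_of_degree_lt hdeg fun b hb => ?_
  rw [one_mul]
  obtain hb | rfl : b < u.natDegree ∨ b = u.natDegree := by omega
  · simpa using pow_mul_pow_mem_span_spanningSet (x := x) hn hb
  · exact pow_mem_span_spanningSet

lemma x_mul_mem_span_spanningSet (hn : 0 < n) (hu : u.Monic) (hxn : x ^ n = 1)
    (hxu : x * aeval y u = aeval y u) :
    ∀ s ∈ spanningSet x y n u.natDegree,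
      x * s ∈ span F (spanningSet x y n u.natDegree : Set Q) := by
  have hlow : ∀ a < n, ∀ b < u.natDegree,
      x * (x ^ a * y ^ b) ∈ span F (spanningSet x y n u.natDegree : Set Q) := by
    intro a ha b hb
    rw [← mul_assoc, ← pow_succ']
    obtain h | h : a + 1 < n ∨ a + 1 = n := by omega
    · exact pow_mul_pow_mem_span_spanningSet h hb
    · rw [h, hxn, ← pow_zero x]
      exact pow_mul_pow_mem_span_spanningSet hn hb
  intro s hs
  rcases mem_insert.1 hs with rfl | hs
  · exact mul_pow_natDegree_mem_of_monic hu (by rw [hxu]; exact aeval_mem_span_spanningSet hn)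
      fun b hb => by simpa using hlow 0 hn b hb
  · obtain ⟨⟨a, b⟩, hab, rfl⟩ := mem_image.1 hs
    rw [mem_product, mem_range, mem_range] at hab
    exact hlow a hab.1 b hab.2

lemma y_mul_mem_span_spanningSet (hn : 0 < n) (hu : u.Monic)
    (hxu : x * aeval y u = aeval y u) (hyu : y * aeval y u = aeval y u) :
    ∀ s ∈ spanningSet x y n u.natDegree,
      y * s ∈ span F (spanningSet x y n u.natDegree : Set Q) := by
  have hxpow : ∀ a, x ^ a * aeval y u = aeval y u := by
    intro a
    induction a with
    | zero => rw [pow_zero, one_mul]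
    | succ a ih => rw [pow_succ, mul_assoc, hxu, ih]
  have hlow : ∀ a < n, ∀ b < u.natDegree,
      y * (x ^ a * y ^ b) ∈ span F (spanningSet x y n u.natDegree : Set Q) := by
    intro a ha b hb
    rw [mul_left_comm, ← pow_succ']
    obtain h | h : b + 1 < u.natDegree ∨ b + 1 = u.natDegree := by omega
    · exact pow_mul_pow_mem_span_spanningSet ha h
    · rw [h]
      exact mul_pow_natDegree_mem_of_monic hu (by rw [hxpow]; exact aeval_mem_span_spanningSet hn)
        fun b hb => pow_mul_pow_mem_span_spanningSet ha hb
  intro s hs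
  rcases mem_insert.1 hs with rfl | hs
  · exact mul_pow_natDegree_mem_of_monic hu (by rw [hyu]; exact aeval_mem_span_spanningSet hn)
      fun b hb => by simpa using hlow 0 hn b hb
  · obtain ⟨⟨a, b⟩, hab, rfl⟩ := mem_image.1 hs
    rw [mem_product, mem_range, mem_range] at hab
    exact hlow a hab.1 b hab.2

theorem finrank_le_of_adjoin_eq_top (hn : 0 < n) (hu : u.Monic) (hxn : x ^ n = 1)
    (hxu : (x - 1) * aeval y u = 0) (hyu : (y - 1) * aeval y u = 0)
    (hgen : Algebra.adjoin F {x, y} = ⊤) :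
    finrank F Q ≤ n * u.natDegree + 1 := by
  set V := span F (spanningSet x y n u.natDegree : Set Q)
  rw [sub_one_mul, sub_eq_zero] at hxu hyu
  have hstable : ∀ q ∈ ({x, y} : Set Q), ∀ v ∈ V, q * v ∈ V := by
    rintro q (rfl | rfl) v hv
    · exact (span_le (p := V.comap (LinearMap.mulLeft F q)) |>.2
        (x_mul_mem_span_spanningSet hn hu hxn hxu)) hv
    · exact (span_le (p := V.comap (LinearMap.mulLeft F q)) |>.2
        (y_mul_mem_span_spanningSet hn hu hxu hyu)) hv
  have hideal : ∀ q ∈ Algebra.adjoin F {x, y}, ∀ v ∈ V, q * v ∈ V := fun q hq =>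
    Algebra.adjoin_induction hstable
      (fun r v hv => by rw [Algebra.algebraMap_eq_smul_one, smul_one_mul]; exact V.smul_mem r hv)
      (fun _ _ _ _ h₁ h₂ v hv => by rw [add_mul]; exact V.add_mem (h₁ v hv) (h₂ v hv))
      (fun _ _ _ _ h₁ h₂ v hv => by rw [mul_assoc]; exact h₁ _ (h₂ v hv)) hq
  have hone : (1 : Q) ∈ V := by
    rcases Nat.eq_zero_or_pos u.natDegree with h | h
    · rw [← pow_zero y, ← h]
      exact pow_mem_span_spanningSet
    · simpa using pow_mul_pow_mem_span_spanningSet (F := F) (x := x) (y := y) hn h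
  have htop : V = ⊤ :=
    eq_top_iff.2 fun q _ => mul_one q ▸ hideal q (hgen ▸ Algebra.mem_top) 1 hone
  calc finrank F Q = finrank F V := by rw [htop, finrank_top]
    _ ≤ #(spanningSet x y n u.natDegree) := finrank_span_finset_le_card _
    _ ≤ n * u.natDegree + 1 := card_spanningSet_le x y n _

end SpanningSet

section Evaluation

variable {F : Type*} [CommRing F]

noncomputable def seqEval (c : ℕ → F) : F[X] →ₗ[F] F :=
  lsum fun j => LinearMap.mulRight F (c j)

noncomputable def arrayEval (A : ℕ → ℕ → F) : MvPolynomial (Fin 2) F →ₗ[F] F :=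
  Finsupp.linearCombination F (fun v : Fin 2 →₀ ℕ => A (v 0) (v 1)) ∘ₗ
    (AddMonoidAlgebra.coeffLinearEquiv F).toLinearMap

-- `seqVal C` and `arrayVal A` are the paper's `Val(C)` and `Val(A)`, with the shift `β` moved
-- into the sequence (resp. array) on which `seqEval` (resp. `arrayEval`) is evaluated.
def seqVal (c : ℕ → F) : Set F[X] :=
  {p | ∀ β, seqEval (fun j => c (j + β)) p = 0}

def arrayVal (A : ℕ → ℕ → F) : Set (MvPolynomial (Fin 2) F) :=
  {f | ∀ β₁ β₂, arrayEval (fun i j => A (i + β₁) (j + β₂)) f = 0}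

lemma seqEval_apply (c : ℕ → F) (p : F[X]) :
    seqEval c p = ∑ j ∈ p.support, p.coeff j * c j := by
  simp [seqEval, sum_def]

lemma arrayEval_apply (A : ℕ → ℕ → F) (f : MvPolynomial (Fin 2) F) :
    arrayEval A f = ∑ v ∈ f.support, f.coeff v * A (v 0) (v 1) :=
  rfl

lemma seqEval_monomial (c : ℕ → F) (n : ℕ) (a : F) : seqEval c (monomial n a) = a * c n := by
  simp [seqEval]

lemma arrayEval_monomial (A : ℕ → ℕ → F) (v : Fin 2 →₀ ℕ) (a : F) :
    arrayEval A (MvPolynomial.monomial v a) = a * A (v 0) (v 1) := by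
  rw [← MvPolynomial.single_eq_monomial, arrayEval]
  exact Finsupp.linearCombination_single F _ _

lemma seqEval_X_mul (c : ℕ → F) (p : F[X]) :
    seqEval c (X * p) = seqEval (fun j => c (j + 1)) p := by
  induction p using Polynomial.induction_on' with
  | add p q hp hq => rw [mul_add, map_add, map_add, hp, hq]
  | monomial n a => rw [X_mul_monomial, seqEval_monomial, seqEval_monomial]

lemma arrayEval_X_zero_pow_mul (A : ℕ → ℕ → F) (k : ℕ) (f : MvPolynomial (Fin 2) F) :
    arrayEval A (MvPolynomial.X 0 ^ k * f) = arrayEval (fun i j => A (i + k) j) f := by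
  induction f using MvPolynomial.induction_on' with
  | add f g hf hg => rw [mul_add, map_add, map_add, hf, hg]
  | monomial v a =>
    rw [MvPolynomial.X_pow_eq_monomial, MvPolynomial.monomial_mul, one_mul, arrayEval_monomial,
      arrayEval_monomial]
    simp [add_comm]

lemma arrayEval_aeval_X_one (A : ℕ → ℕ → F) (p : F[X]) :
    arrayEval A (aeval (MvPolynomial.X 1) p) = seqEval (A 0) p := by
  induction p using Polynomial.induction_on' with
  | add p q hp hq => rw [map_add, map_add, map_add, hp, hq]
  | monomial n a =>
    rw [aeval_monomial, MvPolynomial.algebraMap_eq, MvPolynomial.C_mul_X_pow_eq_monomial,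
      arrayEval_monomial, seqEval_monomial]
    simp

lemma seqEval_shift_eq_of_X_sub_one_mul_mem_seqVal {c : ℕ → F} {u : F[X]}
    (hu : (X - 1) * u ∈ seqVal c) (β : ℕ) : seqEval (fun j => c (j + β)) u = seqEval c u := by
  induction β with
  | zero => rfl
  | succ β ih =>
    have hstep := hu β
    rw [sub_mul, one_mul, map_sub, seqEval_X_mul, sub_eq_zero] at hstep
    rw [← ih, ← hstep]
    congr 2 with j
    rw [add_right_comm, add_assoc]

variable {A : ℕ → ℕ → F} {C : ℕ → F}

lemma X_zero_pow_sub_one_mem_arrayVal {n : ℕ} (hA : ∀ i, A (i + n) = A i) :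
    MvPolynomial.X 0 ^ n - 1 ∈ arrayVal A := by
  intro β₁ β₂
  rw [map_sub, ← mul_one (MvPolynomial.X 0 ^ n), arrayEval_X_zero_pow_mul, sub_eq_zero]
  simp only [add_right_comm _ n β₁, hA]

lemma aeval_X_one_mem_arrayVal (hrow : ∀ i β, ∃ s, ∀ j, A i (j + β) = C (j + s)) {p : F[X]}
    (hp : p ∈ seqVal C) : aeval (MvPolynomial.X 1) p ∈ arrayVal A := by
  intro β₁ β₂
  obtain ⟨s, hs⟩ := hrow β₁ β₂
  rw [arrayEval_aeval_X_one]
  simp only [zero_add, hs]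
  exact hp s

lemma X_zero_sub_one_mul_aeval_X_one_mem_arrayVal
    (hrow : ∀ i β, ∃ s, ∀ j, A i (j + β) = C (j + s)) {u : F[X]}
    (hu : (X - 1) * u ∈ seqVal C) :
    (MvPolynomial.X 0 - 1) * aeval (MvPolynomial.X 1) u ∈ arrayVal A := by
  intro β₁ β₂
  obtain ⟨s, hs⟩ := hrow β₁ β₂
  obtain ⟨s', hs'⟩ := hrow (1 + β₁) β₂
  rw [sub_mul, one_mul, map_sub, ← pow_one (MvPolynomial.X 0 : MvPolynomial (Fin 2) F),
    arrayEval_X_zero_pow_mul, arrayEval_aeval_X_one, arrayEval_aeval_X_one]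
  simp only [zero_add, hs, hs', seqEval_shift_eq_of_X_sub_one_mul_mem_seqVal hu, sub_self]

end Evaluation

lemma composedArray_row {α : Type*} {A : ℕ → ℕ → α} {C : ℕ → α} {n₂ : ℕ} [NeZero n₂]
    {S : ℕ → ZMod n₂} (hC : Function.Periodic C n₂)
    (hA : ∀ i j, A i j = C (((j : ZMod n₂) - S i).val)) (i β j : ℕ) :
    A i (j + β) = C (j + ((β : ZMod n₂) - S i).val) := by
  rw [hA, ← hC.map_mod_nat, ← hC.map_mod_nat (j + _)]
  congr 1
  rw [← ZMod.natCast_eq_natCast_iff']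
  push_cast [ZMod.natCast_val, ZMod.cast_id]
  ring

lemma composedArray_periodic {α : Type*} {A : ℕ → ℕ → α} {C : ℕ → α} {n₁ n₂ : ℕ}
    {S : ℕ → ZMod n₂}
    (hS : ∀ i, S (i + n₁) = S i) (hA : ∀ i j, A i j = C (((j : ZMod n₂) - S i).val)) (i : ℕ) :
    A (i + n₁) = A i := by
  ext j
  rw [hA, hA, hS]

lemma adjoin_mk_X_zero_X_one (F : Type*) [CommRing F] (I : Ideal (MvPolynomial (Fin 2) F)) :
    Algebra.adjoin F {Ideal.Quotient.mkₐ F I (MvPolynomial.X 0),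
      Ideal.Quotient.mkₐ F I (MvPolynomial.X 1)} = ⊤ := by
  have hrange : ({Ideal.Quotient.mkₐ F I (MvPolynomial.X 0),
      Ideal.Quotient.mkₐ F I (MvPolynomial.X 1)} : Set _) =
      Ideal.Quotient.mkₐ F I '' Set.range MvPolynomial.X := by
    rw [← Set.range_comp]
    ext
    simp [Fin.exists_fin_two, eq_comm]
  rw [hrange, Algebra.adjoin_image, MvPolynomial.adjoin_range_X, Algebra.map_top,
    AlgHom.range_eq_top]
  exact Ideal.Quotient.mkₐ_surjective F I

theorem stmt_9_general {F : Type*} [Field F] (n₁ n₂ : ℕ)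
    (hn₁ : 0 < n₁) [NeZero n₂]
    (S : ℕ → ZMod n₂) (hS : ∀ i : ℕ, S (i + n₁) = S i)
    (C : ℕ → F) (hC : ∀ j : ℕ, C (j + n₂) = C j)
    (A : ℕ → ℕ → F)
    (hA : ∀ i j : ℕ, A i j = C (((j : ZMod n₂) - S i).val))
    (IC : Ideal (Polynomial F))
    (hIC : ∀ g : Polynomial F,
      g ∈ IC ↔ ∀ β : ℕ, ∑ j ∈ g.support, g.coeff j * C (j + β) = 0)
    (m : Polynomial F) (hmonic : m.Monic) (hgen : IC = Ideal.span {m})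
    (hdiv : (Polynomial.X - 1 : Polynomial F) ∣ m)
    (IA : Ideal (MvPolynomial (Fin 2) F))
    (hIA : ∀ f : MvPolynomial (Fin 2) F,
      f ∈ IA ↔ ∀ β₁ β₂ : ℕ,
        ∑ v ∈ f.support, f.coeff v * A (v 0 + β₁) (v 1 + β₂) = 0) :
    Module.finrank F (MvPolynomial (Fin 2) F ⧸ IA) ≤
      n₁ * m.natDegree - (n₁ - 1) := by
  obtain ⟨u, rfl⟩ := hdiv
  have hu : u.Monic := (monic_X_sub_C 1).of_mul_monic_left (by simpa using hmonic)
  have hmC : (X - 1) * u ∈ seqVal C := fun β => by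
    simpa [seqEval_apply] using (hIC _).1 (hgen ▸ Ideal.mem_span_singleton_self _) β
  have hrow : ∀ i β, ∃ s, ∀ j, A i (j + β) = C (j + s) :=
    fun i β => ⟨_, composedArray_row hC hA i β⟩
  have hmk : ∀ f ∈ arrayVal A, Ideal.Quotient.mkₐ F IA f = 0 := fun f hf =>
    Ideal.Quotient.eq_zero_iff_mem.2 ((hIA f).2 hf)
  have hxn := hmk _ (X_zero_pow_sub_one_mem_arrayVal (composedArray_periodic hS hA))
  have hxu := hmk _ (X_zero_sub_one_mul_aeval_X_one_mem_arrayVal hrow hmC)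
  have hyu := hmk _ (aeval_X_one_mem_arrayVal hrow hmC)
  simp only [map_sub, map_pow, map_one, map_mul, ← aeval_algHom_apply, aeval_X,
    sub_eq_zero] at hxn hxu hyu
  refine (finrank_le_of_adjoin_eq_top hn₁ hu hxn hxu hyu
    (adjoin_mk_X_zero_X_one F IA)).trans_eq ?_
  rw [← C_1, (monic_X_sub_C 1).natDegree_mul hu, natDegree_X_sub_C, mul_add, mul_one]
  omega

/-- Proposition 2: let `A` be the 2-dimensional array obtained by composing an
`n₁`-periodic shift sequence `S : ℕ → ZMod n₂` (no undetermined entries) with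
an `n₂`-periodic column sequence `C` whose minimal polynomial is `m(y)`.
If `y - 1` divides `m(y)`, then `L(A) ≤ n₁ * deg m - (n₁ - 1)`, i.e.
`L(A)/(n₁n₂) ≤ L(C)/n₂ - (n₁-1)/(n₁n₂)`. -/
theorem stmt_9 {F : Type*} [Field F] [Fintype F] (n₁ n₂ : ℕ)
    (hn₁ : 0 < n₁) [NeZero n₂]
    (S : ℕ → ZMod n₂) (hS : ∀ i : ℕ, S (i + n₁) = S i)
    (C : ℕ → F) (hC : ∀ j : ℕ, C (j + n₂) = C j)
    (A : ℕ → ℕ → F)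
    (hA : ∀ i j : ℕ, A i j = C (((j : ZMod n₂) - S i).val))
    (IC : Ideal (Polynomial F))
    (hIC : ∀ g : Polynomial F,
      g ∈ IC ↔ ∀ β : ℕ, ∑ j ∈ g.support, g.coeff j * C (j + β) = 0)
    (m : Polynomial F) (hmonic : m.Monic) (hgen : IC = Ideal.span {m})
    (hdiv : (Polynomial.X - 1 : Polynomial F) ∣ m)
    (IA : Ideal (MvPolynomial (Fin 2) F))
    (hIA : ∀ f : MvPolynomial (Fin 2) F,
      f ∈ IA ↔ ∀ β₁ β₂ : ℕ,
        ∑ v ∈ f.support, f.coeff v * A (v 0 + β₁) (v 1 + β₂) = 0) :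
    Module.finrank F (MvPolynomial (Fin 2) F ⧸ IA) ≤
      n₁ * m.natDegree - (n₁ - 1) :=
  stmt_9_general n₁ n₂ hn₁ S hS C hC A hA IC hIC m hmonic hgen hdiv IA hIA
end

section
/- (Proposition 3) Let A : ℕ × ℕ → 𝔽_q be a 2-dimensional array with A(i+n₁, j) = A(i, j+n₂) = A(i,j) for all i,j, regarded as an n₁-fold multisequence whose columns are the n₂-periodic sequences j ↦ A(i,j) for 0 ≤ i < n₁. Let m(y) be the joint minimal polynomial of this multisequence, i.e., the monic generator of the intersection of the ideals Val of the individual columns, and let JL(A) = deg(m) be the joint linear complexity. Then L(A) ≤ n₁·JL(A); equivalently, the normalized linear complexity L(A)/(n₁n₂) is at most the normalized joint linear complexity JL(A)/n₂. -/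
/-!
`L(A)` is the dimension of `F[x,y] ⧸ Val(A)`. Row periodicity puts `x ^ n₁ - 1` into `Val(A)`, and
`m(y)` lies in `Val(A)` because every row shift of `A` has one of the `n₁` columns as its first
column. The quotient is generated by the images of `x` and `y`, which are annihilated by nonzero
polynomials of degrees `n₁` and `deg m`, so it has dimension at most `n₁ * deg m`.
-/

section Adjoin

open Polynomial

variable {F S : Type*} [Field F] [CommRing S] [Algebra F S]

theorem finrank_adjoin_singleton_le_natDegree {x : S} {p : F[X]} (hp : p ≠ 0)
    (hpx : aeval x p = 0) : Module.finrank F (Algebra.adjoin F {x}) ≤ p.natDegree := by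
  have hint : IsIntegral F x := IsAlgebraic.isIntegral ⟨p, hp, hpx⟩
  rw [(Algebra.adjoin.powerBasis hint).finrank, Algebra.adjoin.powerBasis_dim]
  exact natDegree_le_natDegree (minpoly.degree_le_of_ne_zero F x hp hpx)

theorem finrank_le_mul_of_adjoin_pair_eq_top {x y : S} (hxy : Algebra.adjoin F {x, y} = ⊤)
    {p q : F[X]} (hp : p ≠ 0) (hq : q ≠ 0) (hpx : aeval x p = 0) (hqy : aeval y q = 0) :
    Module.finrank F S ≤ p.natDegree * q.natDegree := calc
  Module.finrank F S = Module.finrank F ↥(Algebra.adjoin F {x} ⊔ Algebra.adjoin F {y}) := by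
    rw [← Algebra.adjoin_union, Set.singleton_union, hxy]
    exact Subalgebra.topEquiv.toLinearEquiv.finrank_eq.symm
  _ ≤ Module.finrank F (Algebra.adjoin F {x}) * Module.finrank F (Algebra.adjoin F {y}) :=
    Subalgebra.finrank_sup_le_of_free _ _
  _ ≤ p.natDegree * q.natDegree := Nat.mul_le_mul
    (finrank_adjoin_singleton_le_natDegree hp hpx) (finrank_adjoin_singleton_le_natDegree hq hqy)

end Adjoin

section Bivariate

open MvPolynomial

theorem finrank_quotient_le_mul_of_aeval_X_mem {F : Type*} [Field F]
    {I : Ideal (MvPolynomial (Fin 2) F)} {p q : Polynomial F} (hp : p ≠ 0) (hq : q ≠ 0)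
    (hpI : Polynomial.aeval (X 0) p ∈ I) (hqI : Polynomial.aeval (X 1) q ∈ I) :
    Module.finrank F (MvPolynomial (Fin 2) F ⧸ I) ≤ p.natDegree * q.natDegree := by
  set π := Ideal.Quotient.mkₐ F I
  have hgen : Algebra.adjoin F {π (X 0), π (X 1)} = ⊤ := by
    have hX : ({X 0, X 1} : Set (MvPolynomial (Fin 2) F)) = Set.range X := by
      ext; simp [Fin.exists_fin_two, eq_comm]
    rw [← Set.image_pair, Algebra.adjoin_image, hX, adjoin_range_X, Algebra.map_top,
      AlgHom.range_eq_top]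
    exact Ideal.Quotient.mkₐ_surjective F I
  refine finrank_le_mul_of_adjoin_pair_eq_top hgen hp hq ?_ ?_ <;>
    rw [Polynomial.aeval_algHom_apply, Ideal.Quotient.mkₐ_eq_mk, Ideal.Quotient.eq_zero_iff_mem]
  exacts [hpI, hqI]

end Bivariate

section CoeffPairing

open MvPolynomial

variable {σ R : Type*} [CommSemiring R] (w : (σ →₀ ℕ) → R)

noncomputable def coeffPairing : MvPolynomial σ R →ₗ[R] R :=
  Finsupp.linearCombination R w ∘ₗ (AddMonoidAlgebra.coeffLinearEquiv R).toLinearMap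

theorem coeffPairing_apply (f : MvPolynomial σ R) :
    coeffPairing w f = ∑ v ∈ f.support, f.coeff v * w v := by
  rw [coeffPairing, LinearMap.comp_apply, LinearEquiv.coe_coe, Finsupp.linearCombination_apply,
    Finsupp.sum]
  rfl

theorem coeffPairing_monomial (v : σ →₀ ℕ) (c : R) : coeffPairing w (monomial v c) = c * w v :=
  Finsupp.linearCombination_single ..

theorem coeffPairing_aeval_X (i : σ) (g : Polynomial R) :
    coeffPairing w (Polynomial.aeval (X i) g) =
      ∑ j ∈ g.support, g.coeff j * w (Finsupp.single i j) := by
  conv_lhs => rw [g.as_sum_support]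
  simp only [map_sum, Polynomial.aeval_monomial, algebraMap_eq, C_mul_X_pow_eq_monomial,
    coeffPairing_monomial]

end CoeffPairing

open MvPolynomial in
theorem stmt_11_general {F : Type*} [Field F] (n₁ : ℕ)
    (hn₁ : 0 < n₁)
    (A : ℕ → ℕ → F)
    (hA₁ : ∀ i j : ℕ, A (i + n₁) j = A i j)
    (J : Ideal (Polynomial F))
    (hJ : ∀ g : Polynomial F,
      g ∈ J ↔ ∀ i < n₁, ∀ β : ℕ, ∑ j ∈ g.support, g.coeff j * A i (j + β) = 0)
    (m : Polynomial F) (hmonic : m.Monic) (hgen : J = Ideal.span {m})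
    (IA : Ideal (MvPolynomial (Fin 2) F))
    (hIA : ∀ f : MvPolynomial (Fin 2) F,
      f ∈ IA ↔ ∀ β₁ β₂ : ℕ,
        ∑ v ∈ f.support, f.coeff v * A (v 0 + β₁) (v 1 + β₂) = 0) :
    Module.finrank F (MvPolynomial (Fin 2) F ⧸ IA) ≤ n₁ * m.natDegree := by
  simp only [← coeffPairing_apply] at hIA
  have hx : Polynomial.aeval (X 0) (Polynomial.X ^ n₁ - Polynomial.C 1 : Polynomial F) ∈ IA := by
    refine (hIA _).2 fun β₁ β₂ => ?_
    rw [map_sub, map_pow, Polynomial.aeval_X, Polynomial.aeval_C, map_one, X_pow_eq_monomial,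
      ← C_1, C_apply, map_sub, coeffPairing_monomial, coeffPairing_monomial]
    simp [add_comm n₁, hA₁]
  have hy : Polynomial.aeval (X 1) m ∈ IA := by
    refine (hIA _).2 fun β₁ β₂ => ?_
    have hrow : A β₁ = A (β₁ % n₁) := by
      have := Function.Periodic.nat_mul (f := A) (fun i => funext (hA₁ i)) (β₁ / n₁) (β₁ % n₁)
      rwa [Nat.cast_id, Nat.mod_add_div'] at this
    simp only [coeffPairing_aeval_X, Finsupp.single_eq_same, zero_add,
      Finsupp.single_eq_of_ne zero_ne_one, hrow]
    exact (hJ m).1 (hgen ▸ Ideal.mem_span_singleton_self m) _ (Nat.mod_lt _ hn₁) β₂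
  calc Module.finrank F (MvPolynomial (Fin 2) F ⧸ IA)
      ≤ (Polynomial.X ^ n₁ - Polynomial.C 1 : Polynomial F).natDegree * m.natDegree :=
        finrank_quotient_le_mul_of_aeval_X_mem (Polynomial.X_pow_sub_C_ne_zero hn₁ 1)
          hmonic.ne_zero hx hy
    _ = n₁ * m.natDegree := by rw [Polynomial.natDegree_X_pow_sub_C]

/-- Proposition 3: let `A` be a doubly periodic 2-dimensional array with period
`(n₁, n₂)`, regarded as an `n₁`-fold multisequence, let `m(y)` be its joint
minimal polynomial (the monic generator of the intersection `J` of the ideals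
of polynomials valid on the individual columns `j ↦ A i j`, `i < n₁`), and let
`JL(A) = deg m` be the joint linear complexity. Then `L(A) ≤ n₁ * JL(A)`,
i.e. `L(A)/(n₁n₂) ≤ JL(A)/n₂`. -/
theorem stmt_11 {F : Type*} [Field F] [Fintype F] (n₁ n₂ : ℕ)
    (hn₁ : 0 < n₁) (hn₂ : 0 < n₂)
    (A : ℕ → ℕ → F)
    (hA₁ : ∀ i j : ℕ, A (i + n₁) j = A i j)
    (hA₂ : ∀ i j : ℕ, A i (j + n₂) = A i j)
    (J : Ideal (Polynomial F))
    (hJ : ∀ g : Polynomial F,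
      g ∈ J ↔ ∀ i < n₁, ∀ β : ℕ, ∑ j ∈ g.support, g.coeff j * A i (j + β) = 0)
    (m : Polynomial F) (hmonic : m.Monic) (hgen : J = Ideal.span {m})
    (IA : Ideal (MvPolynomial (Fin 2) F))
    (hIA : ∀ f : MvPolynomial (Fin 2) F,
      f ∈ IA ↔ ∀ β₁ β₂ : ℕ,
        ∑ v ∈ f.support, f.coeff v * A (v 0 + β₁) (v 1 + β₂) = 0) :
    Module.finrank F (MvPolynomial (Fin 2) F ⧸ IA) ≤ n₁ * m.natDegree :=
  stmt_11_general n₁ hn₁ A hA₁ J hJ m hmonic hgen IA hIA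
end

section
/- Let S : ℕ → Z_{n₂} be a shift sequence with S(i+n₁) = S(i) for all i, n₁ ≥ 2, let C : ℕ → 𝔽_q be a column sequence with C(j+n₂) = C(j) for all j and minimal polynomial m(y), and let A be the 2-dimensional composed array defined by A(i,j) = C(j − S(i) mod n₂). If y − 1 divides m(y), then the normalized multidimensional linear complexity of A is strictly smaller than its normalized joint linear complexity as a multisequence: L(A) < n₁·JL(A), where JL(A) is the degree of the joint minimal polynomial of the columns of A. -/
/-!
Every column of `A` is a cyclic shift of the `n₂`-periodic sequence `C`, so the columns have
the same annihilator as `C` and `JL(A) = deg m`. Write `m = (y - 1) h`. Since `(y - 1) h`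
annihilates `C`, the correlation `∑ h_j C(j + β)` does not depend on `β`; hence
`∑ h_j A(i, j + β)` depends neither on `i` nor on `β`, that is, `(x - 1) h(y) ∈ Val(A)`.
Together with `x ^ n₁ - 1` and `m(y)`, which also lie in `Val(A)`, this relation shows that
`F[x, y] / Val(A)` is spanned by the monomials `x ^ a y ^ b` with `a < n₁`, `b < deg m`,
other than `x y ^ (deg m - 1)`: so `L(A) ≤ n₁ deg m - 1`.
-/

open Polynomial

theorem Function.Periodic.apply_val_natCast_sub {α : Type*} {n : ℕ} [NeZero n] {C : ℕ → α}
    (hC : Function.Periodic C n) (s : ZMod n) (j : ℕ) :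
    C ((j - s : ZMod n).val) = C (j + (-s).val) := by
  rw [sub_eq_add_neg, ZMod.val_add, ZMod.val_natCast, Nat.mod_add_mod, hC.map_mod_nat]

section Sequence

variable {R : Type*} [CommRing R]

/-- `p ∈ Val(u)` iff `shiftFunctional u β p = 0` for all `β`; likewise for `arrayFunctional`. -/
noncomputable def shiftFunctional (u : ℕ → R) (β : ℕ) : R[X] →ₗ[R] R :=
  (basisMonomials R).constr R fun j => u (j + β)

variable {u : ℕ → R}

theorem shiftFunctional_apply (β : ℕ) (p : R[X]) :
    shiftFunctional u β p = ∑ j ∈ p.support, p.coeff j * u (j + β) := by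
  rw [shiftFunctional, Module.Basis.constr_apply]
  rfl

theorem shiftFunctional_monomial_one (β n : ℕ) :
    shiftFunctional u β (monomial n 1) = u (n + β) :=
  (basisMonomials R).constr_basis R _ n

theorem shiftFunctional_one (β : ℕ) : shiftFunctional u β 1 = u β := by
  rw [← monomial_zero_one, shiftFunctional_monomial_one, zero_add]

theorem shiftFunctional_X_mul (β : ℕ) (p : R[X]) :
    shiftFunctional u β (X * p) = shiftFunctional u (β + 1) p := by
  have : (shiftFunctional u β).comp (LinearMap.mulLeft R X) = shiftFunctional u (β + 1) :=
    (basisMonomials R).ext fun n => by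
      simp [shiftFunctional_monomial_one, X_mul_monomial, add_right_comm, add_assoc]
  exact LinearMap.congr_fun this p

theorem shiftFunctional_comp_add (c β : ℕ) :
    shiftFunctional (fun j => u (j + c)) β = shiftFunctional u (β + c) := by
  simp only [shiftFunctional, add_assoc]

theorem periodic_shiftFunctional {n : ℕ} (hu : Function.Periodic u n) :
    Function.Periodic (shiftFunctional u) n := fun β => by
  simp only [shiftFunctional, ← add_assoc, hu _]

theorem forall_shiftFunctional_add_eq_zero_iff {n : ℕ} (hu : Function.Periodic u n) (hn : n ≠ 0)
    (c : ℕ) (p : R[X]) :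
    (∀ β, shiftFunctional u (β + c) p = 0) ↔ ∀ β, shiftFunctional u β p = 0 := by
  refine ⟨fun h β => ?_, fun h β => h _⟩
  have hβ : β + c * (n - 1) + c = β + c * n := by
    obtain ⟨k, rfl⟩ := Nat.exists_eq_succ_of_ne_zero hn
    simp [Nat.mul_succ, add_assoc]
  rw [← ((periodic_shiftFunctional hu).nat_mul c) β, Nat.cast_id, ← hβ]
  exact h _

theorem shiftFunctional_eq_of_X_sub_one_mul {h : R[X]}
    (hh : ∀ β, shiftFunctional u β ((X - 1) * h) = 0) (β : ℕ) :
    shiftFunctional u β h = shiftFunctional u 0 h := by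
  induction β with
  | zero => rfl
  | succ β ih =>
    have := hh β
    rwa [sub_mul, one_mul, map_sub, shiftFunctional_X_mul, sub_eq_zero, ih] at this

end Sequence

section Array

open MvPolynomial

variable {R : Type*} [CommRing R]

noncomputable def arrayFunctional (A : ℕ → ℕ → R) (β₁ β₂ : ℕ) :
    MvPolynomial (Fin 2) R →ₗ[R] R :=
  (basisMonomials (Fin 2) R).constr R fun v => A (v 0 + β₁) (v 1 + β₂)

variable {A : ℕ → ℕ → R}

theorem arrayFunctional_apply (β₁ β₂ : ℕ) (f : MvPolynomial (Fin 2) R) :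
    arrayFunctional A β₁ β₂ f = ∑ v ∈ f.support, f.coeff v * A (v 0 + β₁) (v 1 + β₂) := by
  rw [arrayFunctional, Module.Basis.constr_apply]
  rfl

theorem arrayFunctional_X_pow_mul_aeval (β₁ β₂ a : ℕ) (p : R[X]) :
    arrayFunctional A β₁ β₂ (X 0 ^ a * Polynomial.aeval (X 1) p)
      = shiftFunctional (A (a + β₁)) β₂ p := by
  have : (arrayFunctional A β₁ β₂).comp
      ((LinearMap.mulLeft R (X 0 ^ a)).comp (Polynomial.aeval (X 1)).toLinearMap)
      = shiftFunctional (A (a + β₁)) β₂ :=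
    (Polynomial.basisMonomials R).ext fun n => by
      simp only [Polynomial.coe_basisMonomials, LinearMap.comp_apply, AlgHom.toLinearMap_apply,
        Polynomial.aeval_monomial, map_one, one_mul, LinearMap.mulLeft_apply,
        shiftFunctional_monomial_one, MvPolynomial.X_pow_eq_monomial, MvPolynomial.monomial_mul]
      exact ((basisMonomials (Fin 2) R).constr_basis R _ _).trans (by simp)
  exact LinearMap.congr_fun this p

theorem arrayFunctional_X_pow_sub_one {n : ℕ} (hA : ∀ i, A (i + n) = A i) (β₁ β₂ : ℕ) :
    arrayFunctional A β₁ β₂ (X 0 ^ n - 1) = 0 := by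
  have hn := arrayFunctional_X_pow_mul_aeval (A := A) β₁ β₂ n 1
  have h0 := arrayFunctional_X_pow_mul_aeval (A := A) β₁ β₂ 0 1
  simp only [map_one, mul_one, pow_zero, shiftFunctional_one, zero_add] at hn h0
  rw [map_sub, hn, h0, add_comm, hA, sub_self]

theorem arrayFunctional_aeval {p : R[X]} (hA : ∀ i β, shiftFunctional (A i) β p = 0)
    (β₁ β₂ : ℕ) : arrayFunctional A β₁ β₂ (Polynomial.aeval (X 1) p) = 0 := by
  have h0 := arrayFunctional_X_pow_mul_aeval (A := A) β₁ β₂ 0 p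
  rw [pow_zero, one_mul] at h0
  rw [h0, hA]

theorem arrayFunctional_X_sub_one_mul_aeval {h : R[X]} {c : R}
    (hA : ∀ i β, shiftFunctional (A i) β h = c) (β₁ β₂ : ℕ) :
    arrayFunctional A β₁ β₂ ((X 0 - 1) * Polynomial.aeval (X 1) h) = 0 := by
  have h1 := arrayFunctional_X_pow_mul_aeval (A := A) β₁ β₂ 1 h
  have h0 := arrayFunctional_X_pow_mul_aeval (A := A) β₁ β₂ 0 h
  rw [pow_one] at h1
  rw [pow_zero, one_mul] at h0
  rw [sub_mul, one_mul, map_sub, h1, h0, hA, hA, sub_self]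

end Array

theorem pow_mem_span_pow_of_aeval_eq_zero {K R : Type*} [CommRing K] [Nontrivial K] [CommRing R]
    [Algebra K R] {x : R} {p : K[X]} (hp : p.Monic) (hx : aeval x p = 0) (a : ℕ) :
    x ^ a ∈ Submodule.span K ((x ^ ·) '' ↑(Finset.range p.natDegree)) := by
  rw [← aeval_X_pow (R := K), ← aeval_modByMonic_eq_self_of_root hx, aeval_eq_sum_range]
  refine Submodule.sum_mem _ fun i _ => ?_
  by_cases hi : (X ^ a %ₘ p).coeff i = 0
  · rw [hi, zero_smul]
    exact Submodule.zero_mem _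
  refine Submodule.smul_mem _ _ (Submodule.subset_span ⟨i, ?_, rfl⟩)
  have := ((le_degree_of_ne_zero hi).trans_lt (degree_modByMonic_lt _ hp)).trans_le
    degree_le_natDegree
  exact Finset.mem_range.mpr (by exact_mod_cast this)

theorem finrank_le_card_sub_one_of_mem_span_erase {K M ι : Type*} [DivisionRing K]
    [AddCommGroup M] [Module K M] [DecidableEq ι] {f : ι → M} {s : Finset ι}
    (hs : Submodule.span K (f '' s) = ⊤) {a : ι} (ha : a ∈ s)
    (hfa : f a ∈ Submodule.span K (f '' ↑(s.erase a))) :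
    Module.finrank K M ≤ s.card - 1 := by
  classical
  have htop : Submodule.span K (((s.erase a).image f : Finset M) : Set M) = ⊤ := by
    rw [Finset.coe_image, ← Submodule.span_insert_eq_span hfa, ← Set.image_insert_eq,
      ← Finset.coe_insert, Finset.insert_erase ha, hs]
  calc Module.finrank K M = Module.finrank K (⊤ : Submodule K M) := (finrank_top K M).symm
    _ ≤ ((s.erase a).image f).card := by rw [← htop]; exact finrank_span_finset_le_card _
    _ ≤ (s.erase a).card := Finset.card_image_le
    _ = s.card - 1 := Finset.card_erase_of_mem ha

section Quotient

open MvPolynomial Finset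

variable {K : Type*} [Field K]

noncomputable def quotMonomial (I : Ideal (MvPolynomial (Fin 2) K)) (e : ℕ × ℕ) :
    MvPolynomial (Fin 2) K ⧸ I :=
  Ideal.Quotient.mk I (X 0 ^ e.1 * X 1 ^ e.2)

variable {I : Ideal (MvPolynomial (Fin 2) K)}

theorem aeval_mk_eq_zero {i : Fin 2} {p : K[X]} (hp : Polynomial.aeval (X i) p ∈ I) :
    Polynomial.aeval (Ideal.Quotient.mk I (X i)) p = 0 := by
  rw [← Ideal.Quotient.mkₐ_eq_mk K, Polynomial.aeval_algHom_apply, Ideal.Quotient.mkₐ_eq_mk,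
    Ideal.Quotient.eq_zero_iff_mem]
  exact hp

theorem span_quotMonomial_eq_top {p q : K[X]} (hp : p.Monic) (hq : q.Monic)
    (hpI : Polynomial.aeval (X 0) p ∈ I) (hqI : Polynomial.aeval (X 1) q ∈ I) :
    Submodule.span K (quotMonomial I '' ↑(range p.natDegree ×ˢ range q.natDegree)) = ⊤ := by
  set V := Submodule.span K (quotMonomial I '' ↑(range p.natDegree ×ˢ range q.natDegree))
  have hprod : Submodule.span K ((Ideal.Quotient.mk I (X 0) ^ ·) '' ↑(range p.natDegree)) *
      Submodule.span K ((Ideal.Quotient.mk I (X 1) ^ ·) '' ↑(range q.natDegree)) ≤ V := by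
    rw [Submodule.span_mul_span]
    refine Submodule.span_le.mpr ?_
    rintro _ ⟨_, ⟨i, hi, rfl⟩, _, ⟨j, hj, rfl⟩, rfl⟩
    exact Submodule.subset_span ⟨(i, j), mem_product.mpr ⟨hi, hj⟩, by simp [quotMonomial]⟩
  have hmonomial (a b : ℕ) : Ideal.Quotient.mk I (X 0 ^ a * X 1 ^ b) ∈ V := by
    rw [map_mul, map_pow, map_pow]
    exact hprod (Submodule.mul_mem_mul
      (pow_mem_span_pow_of_aeval_eq_zero hp (aeval_mk_eq_zero hpI) a)
      (pow_mem_span_pow_of_aeval_eq_zero hq (aeval_mk_eq_zero hqI) b))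
  refine Submodule.eq_top_iff'.mpr fun z => ?_
  obtain ⟨f, rfl⟩ := Ideal.Quotient.mk_surjective z
  induction f using MvPolynomial.induction_on' with
  | monomial v c =>
    rw [monomial_fin_two, mul_assoc, MvPolynomial.C_mul', ← Ideal.Quotient.mkₐ_eq_mk K, map_smul]
    exact Submodule.smul_mem _ _ (hmonomial _ _)
  | add f g hf hg =>
    rw [map_add]
    exact add_mem hf hg

theorem quotMonomial_mem_span_erase {h : K[X]} (hh : h.Monic) {n : ℕ} (hn : 1 < n)
    (hI : (X 0 - 1) * Polynomial.aeval (X 1) h ∈ I) :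
    quotMonomial I (1, h.natDegree) ∈ Submodule.span K
      (quotMonomial I '' ↑((range n ×ˢ range (h.natDegree + 1)).erase (1, h.natDegree))) := by
  set d := h.natDegree
  set x := Ideal.Quotient.mk I (X 0)
  set y := Ideal.Quotient.mk I (X 1)
  have hW (a b : ℕ) (ha : a ≤ 1) (hb : b ≤ d) (hne : (a, b) ≠ (1, d)) : x ^ a * y ^ b ∈
      Submodule.span K (quotMonomial I '' ↑((range n ×ˢ range (d + 1)).erase (1, d))) :=
    Submodule.subset_span ⟨(a, b), mem_erase.mpr ⟨hne, mem_product.mpr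
      ⟨mem_range.mpr (by omega), mem_range.mpr (by omega)⟩⟩, by simp [quotMonomial, x, y]⟩
  set r := h.eraseLead
  have hr : ∀ j ∈ r.support, j < d := fun j hj => by
    rw [eraseLead_support, mem_erase] at hj
    exact lt_of_le_of_ne (le_natDegree_of_mem_supp j hj.2) hj.1
  have hrel : (x - 1) * (y ^ d + Polynomial.aeval y r) = 0 := by
    rw [← h.eraseLead_add_C_mul_X_pow, hh.leadingCoeff, ← Ideal.Quotient.eq_zero_iff_mem,
      map_mul, ← Ideal.Quotient.mkₐ_eq_mk K, ← Polynomial.aeval_algHom_apply] at hI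
    simpa [x, y, add_comm] using hI
  have hρ : (x - 1) * Polynomial.aeval y r = ∑ j ∈ r.support, r.coeff j • (x * y ^ j - y ^ j) := by
    conv_lhs => rw [r.as_sum_support_C_mul_X_pow]
    simp only [map_sum, map_mul, Polynomial.aeval_C, map_pow, Polynomial.aeval_X, mul_sum]
    exact sum_congr rfl fun j _ => by rw [mul_left_comm, ← Algebra.smul_def, sub_one_mul]
  have hkey : x ^ 1 * y ^ d =
      x ^ 0 * y ^ d - ∑ j ∈ r.support, r.coeff j • (x ^ 1 * y ^ j - x ^ 0 * y ^ j) := by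
    simp only [pow_zero, pow_one, one_mul, ← hρ]
    linear_combination hrel
  rw [show quotMonomial I (1, d) = x ^ 1 * y ^ d by simp [quotMonomial, x, y], hkey]
  refine sub_mem (hW 0 d (by omega) le_rfl (by simp))
    (sum_mem fun j hj => Submodule.smul_mem _ _ ?_)
  have hj := hr j hj
  exact sub_mem (hW 1 j le_rfl hj.le (by simp; omega)) (hW 0 j (by omega) hj.le (by simp))

theorem finrank_quotient_lt {p h : K[X]} (hp : p.Monic) (hm : ((Polynomial.X - 1) * h).Monic)
    (hn : 1 < p.natDegree) (hpI : Polynomial.aeval (X 0) p ∈ I)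
    (hmI : Polynomial.aeval (X 1) ((Polynomial.X - 1) * h) ∈ I)
    (hI : (X 0 - 1) * Polynomial.aeval (X 1) h ∈ I) :
    Module.finrank K (MvPolynomial (Fin 2) K ⧸ I) <
      p.natDegree * ((Polynomial.X - 1) * h).natDegree := by
  have hX : (Polynomial.X - 1 : K[X]).Monic := by simpa using Polynomial.monic_X_sub_C (1 : K)
  have hh : h.Monic := hX.of_mul_monic_left hm
  have hdeg : ((Polynomial.X - 1) * h).natDegree = h.natDegree + 1 := by
    rw [hX.natDegree_mul hh, add_comm]
    simpa using Polynomial.natDegree_X_sub_C (1 : K)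
  rw [hdeg]
  have hle := finrank_le_card_sub_one_of_mem_span_erase
    (hdeg ▸ span_quotMonomial_eq_top hp hm hpI hmI)
    (mem_product.mpr ⟨mem_range.mpr hn, mem_range.mpr h.natDegree.lt_succ_self⟩)
    (quotMonomial_mem_span_erase hh hn hI)
  rw [card_product, card_range, card_range] at hle
  have : 0 < p.natDegree * (h.natDegree + 1) := by positivity
  omega

end Quotient

theorem stmt_12_general {F : Type*} [Field F] (n₁ n₂ : ℕ)
    (hn₁ : 2 ≤ n₁) [NeZero n₂]
    (S : ℕ → ZMod n₂) (hS : ∀ i : ℕ, S (i + n₁) = S i)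
    (C : ℕ → F) (hC : ∀ j : ℕ, C (j + n₂) = C j)
    (A : ℕ → ℕ → F)
    (hA : ∀ i j : ℕ, A i j = C (((j : ZMod n₂) - S i).val))
    (IC : Ideal (Polynomial F))
    (hIC : ∀ g : Polynomial F,
      g ∈ IC ↔ ∀ β : ℕ, ∑ j ∈ g.support, g.coeff j * C (j + β) = 0)
    (m : Polynomial F) (hmonic : m.Monic) (hgen : IC = Ideal.span {m})
    (hdiv : (Polynomial.X - 1 : Polynomial F) ∣ m)
    (J : Ideal (Polynomial F))
    (hJ : ∀ g : Polynomial F,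
      g ∈ J ↔ ∀ i < n₁, ∀ β : ℕ, ∑ j ∈ g.support, g.coeff j * A i (j + β) = 0)
    (mj : Polynomial F) (hmjmonic : mj.Monic) (hmjgen : J = Ideal.span {mj})
    (IA : Ideal (MvPolynomial (Fin 2) F))
    (hIA : ∀ f : MvPolynomial (Fin 2) F,
      f ∈ IA ↔ ∀ β₁ β₂ : ℕ,
        ∑ v ∈ f.support, f.coeff v * A (v 0 + β₁) (v 1 + β₂) = 0) :
    Module.finrank F (MvPolynomial (Fin 2) F ⧸ IA) < n₁ * mj.natDegree := by
  simp only [← shiftFunctional_apply] at hIC hJ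
  simp only [← arrayFunctional_apply] at hIA
  have hcol (i : ℕ) : A i = fun j => C (j + (-S i).val) :=
    funext fun j => by rw [hA, Function.Periodic.apply_val_natCast_sub hC]
  have hJIC : J = IC := by
    ext g
    simp only [hJ, hIC, hcol, shiftFunctional_comp_add,
      forall_shiftFunctional_add_eq_zero_iff hC (NeZero.ne n₂)]
    exact ⟨fun hg => hg 0 (by omega), fun hg _ _ => hg⟩
  have hmj : mj = m := eq_of_monic_of_associated hmjmonic hmonic
    (Ideal.span_singleton_eq_span_singleton.mp (by rw [← hmjgen, hJIC, hgen]))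
  have hmC := (hIC m).mp (hgen ▸ Ideal.mem_span_singleton_self m)
  obtain ⟨h, rfl⟩ := hdiv
  have hrow (i : ℕ) : A (i + n₁) = A i := funext fun j => by rw [hA, hA, hS]
  have hp : (X ^ n₁ - Polynomial.C 1 : F[X]).natDegree = n₁ := natDegree_X_pow_sub_C
  rw [hmj, ← hp]
  refine finrank_quotient_lt (monic_X_pow_sub_C 1 (by omega)) hmonic (by omega) ?_ ?_ ?_
  · simpa using (hIA _).mpr (arrayFunctional_X_pow_sub_one hrow)
  · exact (hIA _).mpr (arrayFunctional_aeval fun i β => by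
      rw [hcol, shiftFunctional_comp_add]
      exact hmC _)
  · exact (hIA _).mpr (arrayFunctional_X_sub_one_mul_aeval fun i β => by
      rw [hcol, shiftFunctional_comp_add, shiftFunctional_eq_of_X_sub_one_mul hmC])

/-- Let `A` be the 2-dimensional array obtained by composing an `n₁`-periodic
shift sequence `S : ℕ → ZMod n₂` (with `n₁ ≥ 2`) with an `n₂`-periodic column
sequence `C` whose minimal polynomial `m(y)` is divisible by `y - 1`. Then the
normalized multidimensional linear complexity of `A` is strictly smaller than
its normalized joint linear complexity as a multisequence:
`L(A) < n₁ * JL(A)`, where `JL(A)` is the degree of the joint minimal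
polynomial `mj` of the columns of `A`. -/
theorem stmt_12 {F : Type*} [Field F] [Fintype F] (n₁ n₂ : ℕ)
    (hn₁ : 2 ≤ n₁) [NeZero n₂]
    (S : ℕ → ZMod n₂) (hS : ∀ i : ℕ, S (i + n₁) = S i)
    (C : ℕ → F) (hC : ∀ j : ℕ, C (j + n₂) = C j)
    (A : ℕ → ℕ → F)
    (hA : ∀ i j : ℕ, A i j = C (((j : ZMod n₂) - S i).val))
    (IC : Ideal (Polynomial F))
    (hIC : ∀ g : Polynomial F,
      g ∈ IC ↔ ∀ β : ℕ, ∑ j ∈ g.support, g.coeff j * C (j + β) = 0)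
    (m : Polynomial F) (hmonic : m.Monic) (hgen : IC = Ideal.span {m})
    (hdiv : (Polynomial.X - 1 : Polynomial F) ∣ m)
    (J : Ideal (Polynomial F))
    (hJ : ∀ g : Polynomial F,
      g ∈ J ↔ ∀ i < n₁, ∀ β : ℕ, ∑ j ∈ g.support, g.coeff j * A i (j + β) = 0)
    (mj : Polynomial F) (hmjmonic : mj.Monic) (hmjgen : J = Ideal.span {mj})
    (IA : Ideal (MvPolynomial (Fin 2) F))
    (hIA : ∀ f : MvPolynomial (Fin 2) F,
      f ∈ IA ↔ ∀ β₁ β₂ : ℕ,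
        ∑ v ∈ f.support, f.coeff v * A (v 0 + β₁) (v 1 + β₂) = 0) :
    Module.finrank F (MvPolynomial (Fin 2) F ⧸ IA) < n₁ * mj.natDegree :=
  stmt_12_general n₁ n₂ hn₁ S hS C hC A hA IC hIC m hmonic hgen hdiv J hJ mj hmjmonic hmjgen IA hIA
end
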